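/- Let {x^k} be generated by the double-layer fixed point algorithm under conditions (i) and (ii), and assume: (iii) if lim_{k→∞} max_{i∈I_k} p_i(x^k) = 0 then lim_{k→∞} max_{j∈J_k} p_j(x^k) = 0; (iv) for every bounded sequence {y^k} ⊆ H and each i ∈ I, p_i(y^k) → 0 if and only if ‖U_i y^k − y^k‖ → 0. If for each i ∈ I the operator U_i is boundedly regular and the family {C_i : i ∈ I} is boundedly regular, then {x^k} converges in norm to some point x^∞ ∈ C. -/

import Mathlib

open Filter Function Metric Bornology RealInnerProductSpace Topology

/-!
For every point z of C, one relaxed averaged step of cutters satisfies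
‖x⁺ - z‖² + α(2 - α) ∑ ωᵢ ‖Uᵢ x - x‖² ≤ ‖x - z‖². Hence the iterates are Fejér monotone with
respect to C (so bounded), the weighted residuals tend to 0, and so do the step lengths
‖x^{k+1} - x^k‖. Replacing x^k by a fixed point z₀ ∈ C at the steps where an index is inactive
gives bounded sequences to which (iv), then (iii), (iv) again and the bounded regularity of Uᵢ
apply: d(x^k, Cᵢ) → 0 along the steps where i ∈ J_k. Since every index is active in J within
each window of s steps and the steps shrink, d(x^k, Cᵢ) → 0 along all k; bounded regularity of
the family gives d(x^k, C) → 0, and a Fejér monotone sequence approaching a closed set converges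
to one of its points.
-/

theorem tendsto_zero_of_succ_add_le {a b : ℕ → ℝ} (ha : ∀ k, 0 ≤ a k) (hb : ∀ k, 0 ≤ b k)
    (h : ∀ k, a (k + 1) + b k ≤ a k) : Tendsto b atTop (𝓝 0) := by
  have hanti : Antitone a := antitone_nat_of_succ_le fun k => by linarith [h k, hb k]
  have hlim := tendsto_atTop_ciInf hanti ⟨0, by rintro _ ⟨k, rfl⟩; exact ha k⟩
  have hdiff : Tendsto (fun k => a k - a (k + 1)) atTop (𝓝 0) := by
    simpa using hlim.sub (hlim.comp (tendsto_add_atTop_nat 1))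
  exact squeeze_zero hb (fun k => by linarith [h k]) hdiff

section Fejer

variable {X : Type*} [PseudoMetricSpace X]

def IsFejerMonotone (x : ℕ → X) (C : Set X) : Prop :=
  ∀ z ∈ C, ∀ k, dist (x (k + 1)) z ≤ dist (x k) z

namespace IsFejerMonotone

variable {x : ℕ → X} {C : Set X}

theorem dist_le_of_le (hx : IsFejerMonotone x C) {z : X} (hz : z ∈ C) {k n : ℕ} (hkn : k ≤ n) :
    dist (x n) z ≤ dist (x k) z :=
  antitone_nat_of_succ_le (f := fun k => dist (x k) z) (hx z hz) hkn

theorem isBounded_range (hx : IsFejerMonotone x C) (hC : C.Nonempty) :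
    IsBounded (Set.range x) := by
  obtain ⟨z, hz⟩ := hC
  refine isBounded_closedBall (x := z) (r := dist (x 0) z) |>.subset ?_
  rintro _ ⟨k, rfl⟩
  exact hx.dist_le_of_le hz k.zero_le

theorem cauchySeq (hx : IsFejerMonotone x C) (hC : C.Nonempty)
    (h : Tendsto (fun k => infDist (x k) C) atTop (𝓝 0)) : CauchySeq x := by
  refine Metric.cauchySeq_iff'.2 fun ε hε => ?_
  obtain ⟨N, hN⟩ := (h.eventually_lt_const (half_pos hε)).exists
  obtain ⟨z, hz, hdist⟩ := (infDist_lt_iff hC).1 hN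
  refine ⟨N, fun n hn => ?_⟩
  calc dist (x n) (x N) ≤ dist (x n) z + dist (x N) z := dist_triangle_right _ _ _
    _ ≤ dist (x N) z + dist (x N) z := by gcongr; exact hx.dist_le_of_le hz hn
    _ < ε := by linarith

theorem exists_tendsto [CompleteSpace X] (hx : IsFejerMonotone x C) (hC : IsClosed C)
    (hne : C.Nonempty) (h : Tendsto (fun k => infDist (x k) C) atTop (𝓝 0)) :
    ∃ a ∈ C, Tendsto x atTop (𝓝 a) := by
  obtain ⟨a, ha⟩ := cauchySeq_tendsto_of_complete (hx.cauchySeq hne h)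
  refine ⟨a, (hC.mem_iff_infDist_zero hne).2 ?_, ha⟩
  exact tendsto_nhds_unique (((continuous_infDist_pt C).tendsto a).comp ha) h

theorem of_norm_sub_sq_add_le {E : Type*} [SeminormedAddCommGroup E] {x : ℕ → E} {C : Set E}
    {b : ℕ → ℝ} (hb : ∀ k, 0 ≤ b k)
    (h : ∀ z ∈ C, ∀ k, ‖x (k + 1) - z‖ ^ 2 + b k ≤ ‖x k - z‖ ^ 2) : IsFejerMonotone x C :=
  fun z hz k => by
    rw [dist_eq_norm, dist_eq_norm]
    exact (pow_le_pow_iff_left₀ (norm_nonneg _) (norm_nonneg _) two_ne_zero).1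
      (by linarith [h z hz k, hb k])

end IsFejerMonotone

theorem tendsto_infDist_of_tendsto_ite {x : ℕ → X} {C : Set X} {P : ℕ → Prop} [DecidablePred P]
    {s : ℕ} (hcover : ∀ k, ∃ l < s, P (k + l))
    (hstep : Tendsto (fun k => dist (x k) (x (k + 1))) atTop (𝓝 0))
    (h : Tendsto (fun k => if P k then infDist (x k) C else 0) atTop (𝓝 0)) :
    Tendsto (fun k => infDist (x k) C) atTop (𝓝 0) := by
  have hbound : ∀ k, infDist (x k) C ≤
      ∑ l ∈ Finset.range s, (if P (k + l) then infDist (x (k + l)) C else 0)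
        + ∑ l ∈ Finset.range s, dist (x (k + l)) (x (k + l + 1)) := fun k => by
    obtain ⟨l, hls, hP⟩ := hcover k
    have hfar : infDist (x (k + l)) C ≤
        ∑ j ∈ Finset.range s, (if P (k + j) then infDist (x (k + j)) C else 0) := by
      refine (if_pos hP).symm.le.trans (Finset.single_le_sum
        (f := fun j => if P (k + j) then infDist (x (k + j)) C else 0) (fun j _ => ?_)
        (Finset.mem_range.2 hls))
      split_ifs
      exacts [infDist_nonneg, le_rfl]
    have hnear : dist (x k) (x (k + l)) ≤
        ∑ j ∈ Finset.range s, dist (x (k + j)) (x (k + j + 1)) :=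
      (dist_le_range_sum_dist (fun j => x (k + j)) l).trans <|
        Finset.sum_le_sum_of_subset_of_nonneg (Finset.range_subset_range.2 hls.le)
          fun _ _ _ => dist_nonneg
    linarith [infDist_le_infDist_add_dist (s := C) (x := x k) (y := x (k + l))]
  refine squeeze_zero (fun k => infDist_nonneg) hbound ?_
  simpa using (tendsto_finsetSum _ fun l _ => h.comp (tendsto_add_atTop_nat l)).add
    (tendsto_finsetSum _ fun l _ => hstep.comp (tendsto_add_atTop_nat l))

theorem Bornology.IsBounded.range_ite {x : ℕ → X} (hx : IsBounded (Set.range x)) (P : ℕ → Prop)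
    [DecidablePred P] (z : X) : IsBounded (Set.range fun k => if P k then x k else z) :=
  (hx.union (isBounded_singleton (x := z))).subset <| Set.range_subset_iff.2 fun k => by
    split_ifs
    exacts [Or.inl (Set.mem_range_self k), Or.inr rfl]

end Fejer

section Masking

variable {ι : Type*} [DecidableEq ι] {A : ℕ → Finset ι}

theorem tendsto_comp_ite_iff {X : Type*} {f : X → ℝ} {z : X} (hz : f z = 0) {P : ℕ → Prop}
    [DecidablePred P] {x : ℕ → X} :
    Tendsto (fun k => f (if P k then x k else z)) atTop (𝓝 0) ↔
      Tendsto (fun k => if P k then f (x k) else 0) atTop (𝓝 0) := by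
  simp only [apply_ite f, hz]

theorem tendsto_finset_sup'_of_tendsto_ite [Fintype ι] {f : ι → ℕ → ℝ}
    (hA : ∀ k, (A k).Nonempty) (hf : ∀ i k, 0 ≤ f i k)
    (h : ∀ i, Tendsto (fun k => if i ∈ A k then f i k else 0) atTop (𝓝 0)) :
    Tendsto (fun k => (A k).sup' (hA k) fun i => f i k) atTop (𝓝 0) := by
  refine squeeze_zero (g := fun k => ∑ i, if i ∈ A k then f i k else 0) (fun k => ?_)
    (fun k => Finset.sup'_le _ _ fun i hi => ?_)
    (by simpa using tendsto_finsetSum Finset.univ fun i _ => h i)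
  · obtain ⟨i, hi⟩ := hA k
    exact (hf i k).trans (Finset.le_sup' (fun i => f i k) hi)
  · refine (if_pos hi).symm.le.trans
      (Finset.single_le_sum (f := fun j => if j ∈ A k then f j k else 0) (fun j _ => ?_)
        (Finset.mem_univ i))
    split_ifs
    exacts [hf j k, le_rfl]

theorem tendsto_ite_of_tendsto_finset_sup' {f : ι → ℕ → ℝ} (hA : ∀ k, (A k).Nonempty)
    (hf : ∀ i k, 0 ≤ f i k) (h : Tendsto (fun k => (A k).sup' (hA k) fun i => f i k) atTop (𝓝 0))
    (i : ι) : Tendsto (fun k => if i ∈ A k then f i k else 0) atTop (𝓝 0) := by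
  refine squeeze_zero (fun k => ?_) (fun k => ?_) h
  · split_ifs
    exacts [hf i k, le_rfl]
  · split_ifs with hi
    · exact Finset.le_sup' (fun i => f i k) hi
    · obtain ⟨j, hj⟩ := hA k
      exact (hf j k).trans (Finset.le_sup' (fun i => f i k) hj)

theorem tendsto_ite_of_tendsto_sum_mul_sq {ω r : ℕ → ι → ℝ} {c : ℝ} (hc : 0 < c)
    (hω : ∀ k, ∀ i ∈ A k, c ≤ ω k i) (hr : ∀ k i, 0 ≤ r k i)
    (h : Tendsto (fun k => ∑ i ∈ A k, ω k i * r k i ^ 2) atTop (𝓝 0)) (i : ι) :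
    Tendsto (fun k => if i ∈ A k then r k i else 0) atTop (𝓝 0) := by
  refine squeeze_zero (fun k => ?_) (fun k => ?_)
    (by simpa only [zero_div, Real.sqrt_zero] using (h.div_const c).sqrt)
  · split_ifs
    exacts [hr k i, le_rfl]
  split_ifs with hi
  · refine Real.le_sqrt_of_sq_le ((le_div_iff₀ hc).2 ?_)
    calc r k i ^ 2 * c ≤ ω k i * r k i ^ 2 := by
          rw [mul_comm]; exact mul_le_mul_of_nonneg_right (hω k i hi) (sq_nonneg _)
      _ ≤ ∑ j ∈ A k, ω k j * r k j ^ 2 := Finset.single_le_sum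
          (f := fun j => ω k j * r k j ^ 2)
          (fun j hj => mul_nonneg (hc.le.trans (hω k j hj)) (sq_nonneg _)) hi
  · exact Real.sqrt_nonneg _

end Masking

section WeightedAverage

variable {E : Type*} {ι : Type*} {s : Finset ι} {ω : ι → ℝ}

theorem sum_smul_sub_eq_sum_smul_sub [AddCommGroup E] [Module ℝ E] (hω₁ : ∑ i ∈ s, ω i = 1)
    (y : ι → E) (x : E) : ∑ i ∈ s, ω i • y i - x = ∑ i ∈ s, ω i • (y i - x) := by
  simp only [smul_sub, Finset.sum_sub_distrib, ← Finset.sum_smul, hω₁, one_smul]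

variable [SeminormedAddCommGroup E] [NormedSpace ℝ E]

theorem norm_sum_smul_sq_le (hω₀ : ∀ i ∈ s, 0 ≤ ω i) (hω₁ : ∑ i ∈ s, ω i = 1) (v : ι → E) :
    ‖∑ i ∈ s, ω i • v i‖ ^ 2 ≤ ∑ i ∈ s, ω i * ‖v i‖ ^ 2 :=
  (convexOn_univ_norm.pow (fun _ _ => norm_nonneg _) 2).map_sum_le hω₀ hω₁
    fun _ _ => Set.mem_univ _

theorem norm_relaxed_average_step_sq_le (hω₀ : ∀ i ∈ s, 0 ≤ ω i) (hω₁ : ∑ i ∈ s, ω i = 1)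
    (U : ι → E → E) (α : ℝ) (x : E) :
    ‖α • (∑ i ∈ s, ω i • U i x - x)‖ ^ 2 ≤ α ^ 2 * ∑ i ∈ s, ω i * ‖U i x - x‖ ^ 2 := by
  rw [norm_smul, mul_pow, Real.norm_eq_abs, sq_abs, sum_smul_sub_eq_sum_smul_sub hω₁]
  exact mul_le_mul_of_nonneg_left (norm_sum_smul_sq_le hω₀ hω₁ _) (sq_nonneg α)

end WeightedAverage

section Cutter

variable {H : Type*} [NormedAddCommGroup H] [InnerProductSpace ℝ H]

def IsCutter (U : H → H) : Prop :=
  ∀ x, ∀ z ∈ fixedPoints U, ⟪x - U x, z - U x⟫ ≤ 0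

namespace IsCutter

variable {U : H → H}

theorem inner_sub_le_neg_norm_sq (hU : IsCutter U) (x : H) {z : H} (hz : z ∈ fixedPoints U) :
    ⟪x - z, U x - x⟫ ≤ -‖U x - x‖ ^ 2 := by
  have h := hU x z hz
  rw [show z - U x = (z - x) + (x - U x) by abel, inner_add_right,
    real_inner_self_eq_norm_sq] at h
  rw [← inner_neg_neg, neg_sub, neg_sub, real_inner_comm, ← norm_neg, neg_sub]
  linarith

theorem isClosed_fixedPoints (hU : IsCutter U) : IsClosed (fixedPoints U) := by
  have hFix : fixedPoints U = ⋂ w, {z | ⟪w - U w, z - U w⟫ ≤ 0} := by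
    ext z
    simp only [Set.mem_iInter]
    refine ⟨fun hz w => hU w z hz, fun h => ?_⟩
    exact (sub_eq_zero.mp (real_inner_self_nonpos.mp (h z))).symm
  rw [hFix]
  exact isClosed_iInter fun w =>
    isClosed_le (continuous_const.inner (continuous_id.sub continuous_const)) continuous_const

end IsCutter

variable {ι : Type*} {s : Finset ι} {ω : ι → ℝ}

theorem norm_relaxed_average_sub_sq_add_le {U : ι → H → H} (hU : ∀ i ∈ s, IsCutter (U i))
    (hω₀ : ∀ i ∈ s, 0 ≤ ω i) (hω₁ : ∑ i ∈ s, ω i = 1) {α : ℝ} (hα : 0 ≤ α) (x : H) {z : H}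
    (hz : ∀ i ∈ s, z ∈ fixedPoints (U i)) :
    ‖x + α • (∑ i ∈ s, ω i • U i x - x) - z‖ ^ 2
        + α * (2 - α) * ∑ i ∈ s, ω i * ‖U i x - x‖ ^ 2 ≤ ‖x - z‖ ^ 2 := by
  rw [sum_smul_sub_eq_sum_smul_sub hω₁]
  set d := ∑ i ∈ s, ω i • (U i x - x)
  have hinner : ⟪x - z, d⟫ ≤ -∑ i ∈ s, ω i * ‖U i x - x‖ ^ 2 := by
    rw [inner_sum, ← Finset.sum_neg_distrib]
    refine Finset.sum_le_sum fun i hi => ?_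
    rw [real_inner_smul_right, ← mul_neg]
    exact mul_le_mul_of_nonneg_left ((hU i hi).inner_sub_le_neg_norm_sq x (hz i hi)) (hω₀ i hi)
  have hnorm : ‖d‖ ^ 2 ≤ ∑ i ∈ s, ω i * ‖U i x - x‖ ^ 2 := norm_sum_smul_sq_le hω₀ hω₁ _
  have hexpand : ‖x + α • d - z‖ ^ 2 = ‖x - z‖ ^ 2 + 2 * α * ⟪x - z, d⟫ + α ^ 2 * ‖d‖ ^ 2 := by
    rw [add_sub_right_comm, norm_add_sq_real, real_inner_smul_right, norm_smul,
      Real.norm_of_nonneg hα]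
    ring
  rw [hexpand]
  nlinarith [mul_le_mul_of_nonneg_left hinner (by positivity : (0 : ℝ) ≤ 2 * α),
    mul_le_mul_of_nonneg_left hnorm (sq_nonneg α)]

end Cutter

section RelaxedAverageIteration

variable {H : Type*} [NormedAddCommGroup H] [InnerProductSpace ℝ H]
  {ι : Type*} {U : ι → H → H} {I : ℕ → Finset ι} {ω : ℕ → ι → ℝ} {α : ℕ → ℝ} {x : ℕ → H}

theorem norm_iterate_sub_sq_add_le (hU : ∀ i, IsCutter (U i))
    (hω₀ : ∀ k, ∀ i ∈ I k, 0 ≤ ω k i) (hω₁ : ∀ k, ∑ i ∈ I k, ω k i = 1) (hα : ∀ k, 0 ≤ α k)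
    (hrec : ∀ k, x (k + 1) = x k + α k • (∑ i ∈ I k, ω k i • U i (x k) - x k))
    {z : H} (hz : z ∈ ⋂ i, fixedPoints (U i)) (k : ℕ) :
    ‖x (k + 1) - z‖ ^ 2 + α k * (2 - α k) * ∑ i ∈ I k, ω k i * ‖U i (x k) - x k‖ ^ 2
      ≤ ‖x k - z‖ ^ 2 :=
  hrec k ▸ norm_relaxed_average_sub_sq_add_le (fun i _ => hU i) (hω₀ k) (hω₁ k) (hα k) (x k)
    fun i _ => Set.mem_iInter.mp hz i

theorem isFejerMonotone_iterate (hU : ∀ i, IsCutter (U i))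
    (hω₀ : ∀ k, ∀ i ∈ I k, 0 ≤ ω k i) (hω₁ : ∀ k, ∑ i ∈ I k, ω k i = 1)
    (hα : ∀ k, α k ∈ Set.Icc 0 2)
    (hrec : ∀ k, x (k + 1) = x k + α k • (∑ i ∈ I k, ω k i • U i (x k) - x k)) :
    IsFejerMonotone x (⋂ i, fixedPoints (U i)) :=
  .of_norm_sub_sq_add_le
    (fun k => mul_nonneg (mul_nonneg (hα k).1 (sub_nonneg.2 (hα k).2))
      (Finset.sum_nonneg fun i hi => mul_nonneg (hω₀ k i hi) (sq_nonneg _)))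
    fun _ hz => norm_iterate_sub_sq_add_le hU hω₀ hω₁ (fun k => (hα k).1) hrec hz

theorem tendsto_sum_mul_norm_sub_sq_iterate (hU : ∀ i, IsCutter (U i))
    (hω₀ : ∀ k, ∀ i ∈ I k, 0 ≤ ω k i) (hω₁ : ∀ k, ∑ i ∈ I k, ω k i = 1) {a b : ℝ} (ha : 0 < a)
    (hb : b < 2) (hα : ∀ k, α k ∈ Set.Icc a b)
    (hrec : ∀ k, x (k + 1) = x k + α k • (∑ i ∈ I k, ω k i • U i (x k) - x k))
    (hC : (⋂ i, fixedPoints (U i)).Nonempty) :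
    Tendsto (fun k => ∑ i ∈ I k, ω k i * ‖U i (x k) - x k‖ ^ 2) atTop (𝓝 0) := by
  obtain ⟨z, hz⟩ := hC
  have hc : 0 < a * (2 - b) := mul_pos ha (by linarith)
  have hS₀ : ∀ k, 0 ≤ ∑ i ∈ I k, ω k i * ‖U i (x k) - x k‖ ^ 2 := fun k =>
    Finset.sum_nonneg fun i hi => mul_nonneg (hω₀ k i hi) (sq_nonneg _)
  have hdescent : ∀ k, ‖x (k + 1) - z‖ ^ 2
      + a * (2 - b) * ∑ i ∈ I k, ω k i * ‖U i (x k) - x k‖ ^ 2 ≤ ‖x k - z‖ ^ 2 := fun k => by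
    have hcoeff : a * (2 - b) ≤ α k * (2 - α k) :=
      mul_le_mul (hα k).1 (by linarith [(hα k).2]) (by linarith) (ha.le.trans (hα k).1)
    nlinarith [mul_le_mul_of_nonneg_right hcoeff (hS₀ k),
      norm_iterate_sub_sq_add_le hU hω₀ hω₁ (fun k => ha.le.trans (hα k).1) hrec hz k]
  simpa only [inv_mul_cancel_left₀ hc.ne', mul_zero] using
    (tendsto_zero_of_succ_add_le (fun k => sq_nonneg ‖x k - z‖) (fun k => mul_nonneg hc.le (hS₀ k))
      hdescent).const_mul (a * (2 - b))⁻¹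

theorem tendsto_dist_iterate_succ (hω₀ : ∀ k, ∀ i ∈ I k, 0 ≤ ω k i)
    (hω₁ : ∀ k, ∑ i ∈ I k, ω k i = 1) (hα : ∀ k, α k ∈ Set.Icc 0 2)
    (hrec : ∀ k, x (k + 1) = x k + α k • (∑ i ∈ I k, ω k i • U i (x k) - x k))
    (hS : Tendsto (fun k => ∑ i ∈ I k, ω k i * ‖U i (x k) - x k‖ ^ 2) atTop (𝓝 0)) :
    Tendsto (fun k => dist (x k) (x (k + 1))) atTop (𝓝 0) := by
  refine squeeze_zero (fun k => dist_nonneg) (fun k => Real.le_sqrt_of_sq_le ?_)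
    (by simpa only [mul_zero, Real.sqrt_zero] using (hS.const_mul 4).sqrt)
  rw [dist_comm, dist_eq_norm, hrec k, add_sub_cancel_left]
  refine (norm_relaxed_average_step_sq_le (hω₀ k) (hω₁ k) U (α k) (x k)).trans ?_
  refine mul_le_mul_of_nonneg_right (by nlinarith [(hα k).1, (hα k).2]) ?_
  exact Finset.sum_nonneg fun i hi => mul_nonneg (hω₀ k i hi) (sq_nonneg _)

end RelaxedAverageIteration

theorem doubleLayer_norm_convergence_general
    {H : Type*} [NormedAddCommGroup H] [InnerProductSpace ℝ H] [CompleteSpace H]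
    {m : ℕ} [NeZero m]
    (U : Fin m → H → H) (p : Fin m → H → ℝ)
    (hcutter : ∀ i, ∀ x : H, ∀ z ∈ fixedPoints (U i), ⟪x - U i x, z - U i x⟫ ≤ 0)
    (hpnonneg : ∀ i, ∀ x : H, 0 ≤ p i x)
    (hpfix : ∀ i, fixedPoints (U i) = {x : H | p i x = 0})
    (hC : (⋂ i, fixedPoints (U i)).Nonempty)
    (x : ℕ → H) (Ik Jk : ℕ → Finset (Fin m)) (α : ℕ → ℝ) (ω : ℕ → Fin m → ℝ)
    (hIkne : ∀ k, (Ik k).Nonempty) (hIJ : ∀ k, Ik k ⊆ Jk k)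
    (αminus αplus ωminus : ℝ)
    (hαminus : αminus ∈ Set.Ioc (0 : ℝ) 1) (hαplus : αplus ∈ Set.Ico (1 : ℝ) 2)
    (hωminus : ωminus ∈ Set.Ioc (0 : ℝ) 1)
    (hα : ∀ k, α k ∈ Set.Icc αminus αplus)
    (hω : ∀ k, ∀ i ∈ Ik k, ω k i ∈ Set.Icc ωminus 1)
    (hωsum : ∀ k, ∑ i ∈ Ik k, ω k i = 1)
    (hrec : ∀ k, x (k + 1) = x k + α k • ((∑ i ∈ Ik k, ω k i • U i (x k)) - x k))
    (s : ℕ)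
    (hcover : ∀ k, ∀ i : Fin m, ∃ l < s, i ∈ Jk (k + l))
    (hiii : Tendsto (fun k => (Ik k).sup' (hIkne k) fun i => p i (x k)) atTop (nhds 0) →
      Tendsto (fun k => (Jk k).sup' ((hIkne k).mono (hIJ k)) fun i => p i (x k))
        atTop (nhds 0))
    (hiv : ∀ y : ℕ → H, IsBounded (Set.range y) → ∀ i,
      (Tendsto (fun k => p i (y k)) atTop (nhds 0) ↔
        Tendsto (fun k => ‖U i (y k) - y k‖) atTop (nhds 0)))
    (hbr : ∀ i, ∀ y : ℕ → H, IsBounded (Set.range y) →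
      Tendsto (fun k => ‖U i (y k) - y k‖) atTop (nhds 0) →
      Tendsto (fun k => infDist (y k) (fixedPoints (U i))) atTop (nhds 0))
    (hfbr : ∀ y : ℕ → H, IsBounded (Set.range y) →
      Tendsto (fun k => Finset.univ.sup' Finset.univ_nonempty fun i =>
        infDist (y k) (fixedPoints (U i))) atTop (nhds 0) →
      Tendsto (fun k => infDist (y k) (⋂ i, fixedPoints (U i))) atTop (nhds 0)) :
    ∃ xinf ∈ ⋂ i, fixedPoints (U i), Tendsto x atTop (nhds xinf) := by
  obtain ⟨z₀, hz₀⟩ := hC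
  have hz₀i : ∀ i, z₀ ∈ fixedPoints (U i) := Set.mem_iInter.mp hz₀
  have hp₀ : ∀ i, p i z₀ = 0 := fun i => by simpa [hpfix i] using hz₀i i
  have hω₀ : ∀ k, ∀ i ∈ Ik k, 0 ≤ ω k i := fun k i hi => hωminus.1.le.trans (hω k i hi).1
  have hα₀₂ : ∀ k, α k ∈ Set.Icc 0 2 :=
    fun k => ⟨hαminus.1.le.trans (hα k).1, (hα k).2.trans hαplus.2.le⟩
  have hfejer := isFejerMonotone_iterate hcutter hω₀ hωsum hα₀₂ hrec
  have hbdd := hfejer.isBounded_range ⟨z₀, hz₀⟩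
  have hS := tendsto_sum_mul_norm_sub_sq_iterate hcutter hω₀ hωsum hαminus.1 hαplus.2 hα hrec
    ⟨z₀, hz₀⟩
  have hmove := tendsto_dist_iterate_succ hω₀ hωsum hα₀₂ hrec hS
  have hpI : ∀ i, Tendsto (fun k => if i ∈ Ik k then p i (x k) else 0) atTop (𝓝 0) := fun i =>
    (tendsto_comp_ite_iff (hp₀ i)).1 <| (hiv _ (hbdd.range_ite _ z₀) i).2 <|
      (tendsto_comp_ite_iff (f := fun y => ‖U i y - y‖) (by simp [(hz₀i i).eq])).2 <|
        tendsto_ite_of_tendsto_sum_mul_sq hωminus.1 (fun k i hi => (hω k i hi).1)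
          (fun _ _ => norm_nonneg _) hS i
  have hpJ := tendsto_ite_of_tendsto_finset_sup' _ (fun i k => hpnonneg i (x k))
    (hiii (tendsto_finset_sup'_of_tendsto_ite hIkne (fun i k => hpnonneg i (x k)) hpI))
  have hdistJ : ∀ i, Tendsto (fun k => if i ∈ Jk k then infDist (x k) (fixedPoints (U i)) else 0)
      atTop (𝓝 0) := fun i =>
    (tendsto_comp_ite_iff (f := (infDist · _)) (infDist_zero_of_mem (hz₀i i))).1 <|
      hbr i _ (hbdd.range_ite _ z₀) <| (hiv _ (hbdd.range_ite _ z₀) i).1 <|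
        (tendsto_comp_ite_iff (hp₀ i)).2 (hpJ i)
  refine hfejer.exists_tendsto (isClosed_iInter fun i => IsCutter.isClosed_fixedPoints (hcutter i))
    ⟨z₀, hz₀⟩ (hfbr x hbdd ?_)
  simpa only [Finset.sup'_const] using Tendsto.finset_sup'_nhds_apply Finset.univ_nonempty
    fun i _ => tendsto_infDist_of_tendsto_ite (fun k => hcover k i) hmove (hdistJ i)

/-- Norm convergence of the double-layer fixed point algorithm with
boundedly regular cutters and a boundedly regular family of fixed point sets. -/
theorem doubleLayer_norm_convergence
    {H : Type*} [NormedAddCommGroup H] [InnerProductSpace ℝ H] [CompleteSpace H]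
    {m : ℕ} [NeZero m]
    (U : Fin m → H → H) (p : Fin m → H → ℝ)
    (hcutter : ∀ i, ∀ x : H, ∀ z ∈ fixedPoints (U i), ⟪x - U i x, z - U i x⟫ ≤ 0)
    (hpnonneg : ∀ i, ∀ x : H, 0 ≤ p i x)
    (hpfix : ∀ i, fixedPoints (U i) = {x : H | p i x = 0})
    (hC : (⋂ i, fixedPoints (U i)).Nonempty)
    (x : ℕ → H) (Ik Jk : ℕ → Finset (Fin m)) (α : ℕ → ℝ) (ω : ℕ → Fin m → ℝ)
    (hIkne : ∀ k, (Ik k).Nonempty) (hIJ : ∀ k, Ik k ⊆ Jk k)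
    (αminus αplus ωminus : ℝ)
    (hαminus : αminus ∈ Set.Ioc (0 : ℝ) 1) (hαplus : αplus ∈ Set.Ico (1 : ℝ) 2)
    (hωminus : ωminus ∈ Set.Ioc (0 : ℝ) 1)
    (hα : ∀ k, α k ∈ Set.Icc αminus αplus)
    (hω : ∀ k, ∀ i ∈ Ik k, ω k i ∈ Set.Icc ωminus 1)
    (hωsum : ∀ k, ∑ i ∈ Ik k, ω k i = 1)
    (hrec : ∀ k, x (k + 1) = x k + α k • ((∑ i ∈ Ik k, ω k i • U i (x k)) - x k))
    (s : ℕ) (hs : 1 ≤ s)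
    (hcover : ∀ k, ∀ i : Fin m, ∃ l < s, i ∈ Jk (k + l))
    (hiii : Tendsto (fun k => (Ik k).sup' (hIkne k) fun i => p i (x k)) atTop (nhds 0) →
      Tendsto (fun k => (Jk k).sup' ((hIkne k).mono (hIJ k)) fun i => p i (x k))
        atTop (nhds 0))
    (hiv : ∀ y : ℕ → H, IsBounded (Set.range y) → ∀ i,
      (Tendsto (fun k => p i (y k)) atTop (nhds 0) ↔
        Tendsto (fun k => ‖U i (y k) - y k‖) atTop (nhds 0)))
    (hbr : ∀ i, ∀ y : ℕ → H, IsBounded (Set.range y) →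
      Tendsto (fun k => ‖U i (y k) - y k‖) atTop (nhds 0) →
      Tendsto (fun k => infDist (y k) (fixedPoints (U i))) atTop (nhds 0))
    (hfbr : ∀ y : ℕ → H, IsBounded (Set.range y) →
      Tendsto (fun k => Finset.univ.sup' Finset.univ_nonempty fun i =>
        infDist (y k) (fixedPoints (U i))) atTop (nhds 0) →
      Tendsto (fun k => infDist (y k) (⋂ i, fixedPoints (U i))) atTop (nhds 0)) :
    ∃ xinf ∈ ⋂ i, fixedPoints (U i), Tendsto x atTop (nhds xinf) :=
  doubleLayer_norm_convergence_general U p hcutter hpnonneg hpfix hC x Ik Jk α ω hIkne hIJ αminus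
    αplus ωminus hαminus hαplus hωminus hα hω hωsum hrec s hcover hiii hiv hbr hfbr
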